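/- arXiv:1301.1940 — 9 statements merged into one kernel-verified Lean document; each statement's English description precedes it below -/
import Mathlib

section
/- Let x ∈ V, y ∈ V⁺, and set J := { j ∈ Γ | ⟨α_j, y⟩ = 0 }. Then y = 𝔏(x) if and only if x − y belongs to the closed convex cone generated by {−α_j : j ∈ J}. -/
open scoped InnerProductSpace
open Finset

/-- The closed convex cone generated by a finite family of vectors:
the set of non-negative linear combinations. -/
def coneGen {V : Type*} [AddCommGroup V] [Module ℝ V] {ι : Type*} [Fintype ι]
    (v : ι → V) : Set V :=
  {x | ∃ c : ι → ℝ, (∀ i, 0 ≤ c i) ∧ x = ∑ i, c i • v i}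

/-- `y` is a point of `K` closest to `x`. -/
def IsClosestPoint {V : Type*} [NormedAddCommGroup V] (K : Set V) (x y : V) : Prop :=
  y ∈ K ∧ ∀ z ∈ K, dist x y ≤ dist x z

/-! The point `y` of a closed convex set `K` is closest to `x` iff `⟪x - y, w - y⟫ ≤ 0` for all
`w ∈ K`. For the cone spanned by the `ω i`, testing this at `w = 0`, `2 • y` and `y + ω i` reduces
it to `⟪x - y, y⟫ = 0` and `⟪x - y, ω i⟫ ≤ 0` for all `i`. By duality, `⟪x - y, ω j⟫` is the
`j`-th `α`-coordinate of `x - y`, and `⟪x - y, y⟫` is the sum of these coordinates weighted by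
`⟪α j, y⟫ ≥ 0`; as all coordinates are `≤ 0`, this sum vanishes iff they vanish outside `J`. -/

section coneGen

variable {V ι : Type*} [AddCommGroup V] [Module ℝ V] [Fintype ι] (v : ι → V)

lemma zero_mem_coneGen : (0 : V) ∈ coneGen v :=
  ⟨0, fun _ => le_rfl, by simp⟩

lemma mem_coneGen (i : ι) : v i ∈ coneGen v := by
  classical
  exact ⟨Pi.single i 1, fun j => by by_cases h : j = i <;> simp [h], by simp [Pi.single_apply]⟩

variable {v}

lemma add_mem_coneGen {x y : V} (hx : x ∈ coneGen v) (hy : y ∈ coneGen v) :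
    x + y ∈ coneGen v := by
  obtain ⟨c, hc, rfl⟩ := hx
  obtain ⟨d, hd, rfl⟩ := hy
  exact ⟨c + d, fun i => add_nonneg (hc i) (hd i), by simp [add_smul, sum_add_distrib]⟩

lemma smul_mem_coneGen {t : ℝ} (ht : 0 ≤ t) {x : V} (hx : x ∈ coneGen v) :
    t • x ∈ coneGen v := by
  obtain ⟨c, hc, rfl⟩ := hx
  exact ⟨t • c, fun i => mul_nonneg ht (hc i), by simp [smul_sum, mul_smul]⟩

variable (v) in
lemma convex_coneGen : Convex ℝ (coneGen v) :=
  fun _ hx _ hy _ _ ha hb _ => add_mem_coneGen (smul_mem_coneGen ha hx) (smul_mem_coneGen hb hy)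

end coneGen

section projection

variable {V : Type*} [NormedAddCommGroup V] [InnerProductSpace ℝ V]

lemma isClosestPoint_iff_inner_le_zero {K : Set V} (hK : Convex ℝ K) {x y : V} (hy : y ∈ K) :
    IsClosestPoint K x y ↔ ∀ w ∈ K, ⟪x - y, w - y⟫_ℝ ≤ 0 := by
  have : Nonempty K := ⟨⟨y, hy⟩⟩
  have hbdd : BddBelow (Set.range fun w : K => ‖x - w‖) :=
    ⟨0, Set.forall_mem_range.2 fun _ => norm_nonneg _⟩
  rw [← norm_eq_iInf_iff_real_inner_le_zero hK hy, IsClosestPoint, and_iff_right hy]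
  simp only [dist_eq_norm]
  constructor
  · intro h
    exact le_antisymm (le_ciInf fun w => h w w.2) (ciInf_le hbdd ⟨y, hy⟩)
  · intro h z hz
    exact h ▸ ciInf_le hbdd ⟨z, hz⟩

lemma isClosestPoint_coneGen_iff {ι : Type*} [Fintype ι] {v : ι → V} {x y : V}
    (hy : y ∈ coneGen v) :
    IsClosestPoint (coneGen v) x y ↔ ⟪x - y, y⟫_ℝ = 0 ∧ ∀ i, ⟪x - y, v i⟫_ℝ ≤ 0 := by
  rw [isClosestPoint_iff_inner_le_zero (convex_coneGen v) hy]
  constructor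
  · intro h
    have h0 := h 0 (zero_mem_coneGen v)
    have h2 := h ((2 : ℝ) • y) (smul_mem_coneGen zero_le_two hy)
    rw [zero_sub, inner_neg_right, neg_nonpos] at h0
    rw [two_smul, add_sub_cancel_right] at h2
    exact ⟨le_antisymm h2 h0, fun i => by
      simpa using h (y + v i) (add_mem_coneGen hy (mem_coneGen v i))⟩
  · rintro ⟨hy0, hv⟩ _ ⟨c, hc, rfl⟩
    rw [inner_sub_right, hy0, sub_zero, inner_sum]
    exact sum_nonpos fun i _ => by
      rw [real_inner_smul_right]
      exact mul_nonpos_of_nonneg_of_nonpos (hc i) (hv i)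

end projection

section dualBasis

variable {V ι : Type*} [NormedAddCommGroup V] [InnerProductSpace ℝ V] [Fintype ι]

lemma Module.Basis.inner_eq_sum_repr_mul_inner (b : Module.Basis ι ℝ V) (v w : V) :
    ⟪v, w⟫_ℝ = ∑ j, b.repr v j * ⟪b j, w⟫_ℝ := by
  conv_lhs => rw [← b.sum_repr v]
  simp only [sum_inner, real_inner_smul_left]

lemma Module.Basis.eq_sum_smul_neg_iff (b : Module.Basis ι ℝ V) (v : V) (c : ι → ℝ) :
    v = ∑ j, c j • -b j ↔ c = -b.repr v := by
  simp only [smul_neg, sum_neg_distrib, ← neg_eq_iff_eq_neg (a := v)]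
  constructor
  · intro h
    rw [← neg_neg c, ← b.repr_sum_self c, ← h, map_neg, Finsupp.coe_neg, neg_neg]
  · rintro rfl
    simp [b.sum_repr]

variable [DecidableEq ι] (b : Module.Basis ι ℝ V) {ω : ι → V}

lemma inner_eq_repr_of_dual (hω : ∀ i j, ⟪ω i, b j⟫_ℝ = if i = j then 1 else 0) (v : V) (j : ι) :
    ⟪v, ω j⟫_ℝ = b.repr v j := by
  rw [b.inner_eq_sum_repr_mul_inner]
  simp [real_inner_comm (ω j), hω]

lemma inner_basis_nonneg_of_mem_coneGen
    (hω : ∀ i j, ⟪ω i, b j⟫_ℝ = if i = j then 1 else 0) {y : V} (hy : y ∈ coneGen ω) (j : ι) :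
    0 ≤ ⟪b j, y⟫_ℝ := by
  obtain ⟨d, hd, rfl⟩ := hy
  rw [real_inner_comm, sum_inner]
  simpa [real_inner_smul_left, hω] using hd j

end dualBasis

lemma sum_mul_eq_zero_iff_of_nonpos_of_nonneg {ι : Type*} [Fintype ι] {r s : ι → ℝ}
    (hr : ∀ j, r j ≤ 0) (hs : ∀ j, 0 ≤ s j) :
    ∑ j, r j * s j = 0 ↔ ∀ j, s j ≠ 0 → r j = 0 := by
  rw [sum_eq_zero_iff_of_nonpos fun j _ => mul_nonpos_of_nonpos_of_nonneg (hr j) (hs j)]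
  simp only [mem_univ, true_implies, mul_eq_zero]
  exact forall_congr' fun j => or_iff_not_imp_right

theorem isClosestPoint_iff_cone_general
    {V ι : Type*} [NormedAddCommGroup V] [InnerProductSpace ℝ V]
    [Fintype ι] [DecidableEq ι] (b : Module.Basis ι ℝ V) (ω : ι → V)
    (hω : ∀ i j, ⟪ω i, b j⟫_ℝ = if i = j then 1 else 0)
    (x y : V) (hy : y ∈ coneGen ω) :
    IsClosestPoint (coneGen ω) x y ↔
      ∃ c : ι → ℝ, (∀ j, 0 ≤ c j) ∧ (∀ j, ⟪(b j : V), y⟫_ℝ ≠ 0 → c j = 0) ∧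
        x - y = ∑ j, c j • (-(b j : V)) := by
  simp only [isClosestPoint_coneGen_iff hy, inner_eq_repr_of_dual b hω,
    b.eq_sum_smul_neg_iff, exists_eq_right_right, Pi.neg_apply, neg_nonneg, neg_eq_zero]
  rw [b.inner_eq_sum_repr_mul_inner, and_comm]
  exact and_congr_right fun hr =>
    sum_mul_eq_zero_iff_of_nonpos_of_nonneg hr (inner_basis_nonneg_of_mem_coneGen b hω hy)

/-- For `x ∈ V`, `y ∈ V⁺` and `J = {j | ⟪α j, y⟫ = 0}`, one has `y = 𝔏(x)` iff
`x - y` lies in the closed convex cone generated by `{-α j : j ∈ J}`. -/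
theorem isClosestPoint_iff_cone
    {V ι : Type*} [NormedAddCommGroup V] [InnerProductSpace ℝ V] [FiniteDimensional ℝ V]
    [Fintype ι] [DecidableEq ι] (b : Module.Basis ι ℝ V) (ω : ι → V)
    (hω : ∀ i j, ⟪ω i, b j⟫_ℝ = if i = j then 1 else 0)
    (x y : V) (hy : y ∈ coneGen ω) :
    IsClosestPoint (coneGen ω) x y ↔
      ∃ c : ι → ℝ, (∀ j, 0 ≤ c j) ∧ (∀ j, ⟪(b j : V), y⟫_ℝ ≠ 0 → c j = 0) ∧
        x - y = ∑ j, c j • (-(b j : V)) :=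
  isClosestPoint_iff_cone_general b ω hω x y hy
end

section
/- If ⟨α_i, α_j⟩ ≤ 0 for all i ≠ j, then V⁺ ⊆ V^pos, i.e., every vector x with ⟨x, α_j⟩ ≥ 0 for all j is a non-negative linear combination of the α_i. -/
/-!
Write the coordinates of `x` as `c = c⁺ - c⁻` and put `y = ∑ c⁺ i • α i`, `z = ∑ c⁻ i • α i`,
so `x = y - z`. Since `c⁺` and `c⁻` have disjoint supports, `⟪y, z⟫` only involves the
inner products `⟪α i, α j⟫` with `i ≠ j`, hence is `≤ 0`; and `⟪x, z⟫ ≥ 0` because `x` is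
dominant. Thus `‖z‖² = ⟪y, z⟫ - ⟪x, z⟫ ≤ 0`, so `z = 0` and, by linear independence, `c⁻ = 0`.
-/

open scoped InnerProductSpace
open Finset

lemma posPart_mul_negPart_eq_zero {R : Type*} [Ring R] [LinearOrder R] [IsOrderedRing R]
    (a : R) : a⁺ * a⁻ = 0 := by
  rcases le_total 0 a with h | h
  · simp [negPart_eq_zero.mpr h]
  · simp [posPart_eq_zero.mpr h]

section PairwiseObtuse

variable {V ι : Type*} [NormedAddCommGroup V] [InnerProductSpace ℝ V] [Fintype ι]
  {v : ι → V}

lemma inner_sum_smul_sum_smul_nonpos (hobtuse : ∀ i j, i ≠ j → ⟪v i, v j⟫_ℝ ≤ 0)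
    {a b : ι → ℝ} (ha : ∀ i, 0 ≤ a i) (hb : ∀ i, 0 ≤ b i) (hab : ∀ i, a i * b i = 0) :
    ⟪∑ i, a i • v i, ∑ j, b j • v j⟫_ℝ ≤ 0 := by
  simp only [sum_inner, inner_sum, real_inner_smul_left, real_inner_smul_right]
  refine sum_nonpos fun j _ => sum_nonpos fun i _ => ?_
  rcases eq_or_ne i j with rfl | hij
  · rw [← mul_assoc, mul_comm (b i), hab i, zero_mul]
  · exact mul_nonpos_of_nonneg_of_nonpos (hb j)
      (mul_nonpos_of_nonneg_of_nonpos (ha i) (hobtuse i j hij))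

lemma nonneg_of_inner_sum_smul_nonneg (hli : LinearIndependent ℝ v)
    (hobtuse : ∀ i j, i ≠ j → ⟪v i, v j⟫_ℝ ≤ 0) (c : ι → ℝ)
    (hdom : ∀ j, 0 ≤ ⟪∑ i, c i • v i, v j⟫_ℝ) (i : ι) : 0 ≤ c i := by
  set x := ∑ i, c i • v i
  set y := ∑ i, (c i)⁺ • v i
  set z := ∑ i, (c i)⁻ • v i
  have hxyz : x = y - z := by
    simp only [x, y, z, ← sum_sub_distrib, ← sub_smul, posPart_sub_negPart]
  have hyz : ⟪y, z⟫_ℝ ≤ 0 :=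
    inner_sum_smul_sum_smul_nonpos hobtuse (fun i => posPart_nonneg _)
      (fun i => negPart_nonneg _) (fun i => posPart_mul_negPart_eq_zero _)
  have hxz : 0 ≤ ⟪x, z⟫_ℝ := by
    simp only [z, inner_sum, real_inner_smul_right]
    exact sum_nonneg fun j _ => mul_nonneg (negPart_nonneg _) (hdom j)
  have hz : z = 0 := by
    rw [← real_inner_self_nonpos]
    calc ⟪z, z⟫_ℝ = ⟪y, z⟫_ℝ - ⟪x, z⟫_ℝ := by rw [hxyz, inner_sub_left]; ring
      _ ≤ 0 := by linarith
  have hneg : (c i)⁻ = 0 := Fintype.linearIndependent_iff.mp hli _ hz i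
  exact negPart_eq_zero.mp hneg

end PairwiseObtuse

theorem dominant_subset_pos_general
    {V ι : Type*} [NormedAddCommGroup V] [InnerProductSpace ℝ V]
    [Fintype ι] (b : Module.Basis ι ℝ V)
    (hobtuse : ∀ i j, i ≠ j → ⟪(b i : V), b j⟫_ℝ ≤ 0)
    (x : V) (hx : ∀ j, 0 ≤ ⟪x, (b j : V)⟫_ℝ) :
    x ∈ coneGen (⇑b) := by
  have hsum : ∑ i, b.repr x i • b i = x := b.sum_repr x
  refine ⟨b.repr x, fun i => ?_, hsum.symm⟩
  exact nonneg_of_inner_sum_smul_nonneg b.linearIndependent hobtuse _ (by rwa [hsum]) i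

/-- If `⟪α i, α j⟫ ≤ 0` for `i ≠ j`, then `V⁺ ⊆ V^pos`: any `x` with
`⟪x, α j⟫ ≥ 0` for all `j` is a non-negative combination of the `α i`. -/
theorem dominant_subset_pos
    {V ι : Type*} [NormedAddCommGroup V] [InnerProductSpace ℝ V] [FiniteDimensional ℝ V]
    [Fintype ι] (b : Module.Basis ι ℝ V)
    (hobtuse : ∀ i j, i ≠ j → ⟪(b i : V), b j⟫_ℝ ≤ 0)
    (x : V) (hx : ∀ j, 0 ≤ ⟪x, (b j : V)⟫_ℝ) :
    x ∈ coneGen (⇑b) :=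
  dominant_subset_pos_general b hobtuse x hx
end

section
/- Let J ⊆ Γ, and suppose x lies in the span of {α_j : j ∈ J} and ⟨x, α_j⟩ ≥ 0 for all j ∈ J. If ⟨α_i, α_j⟩ ≤ 0 for all i ≠ j, then x is a non-negative linear combination of {α_j : j ∈ J}. -/
/-!
Write `x = ∑ cᵢ αᵢ` and let `y = ∑ cᵢ⁻ αᵢ` collect the negative coefficients. Since those
coefficients live on `J`, where `⟪x, αⱼ⟫ ≥ 0`, we get `⟪y, x⟫ ≥ 0`. On the other hand
`x + y = ∑ cᵢ⁺ αᵢ`, and the coefficients `cᵢ⁻` and `cᵢ⁺` have disjoint supports, so obtuseness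
gives `⟪y, x + y⟫ ≤ 0`. Hence `‖y‖² ≤ 0`, so `y = 0`, and linear independence forces `cᵢ⁻ = 0`.
-/

open scoped InnerProductSpace
open Finset

lemma negPart_mul_posPart {α : Type*} [Ring α] [LinearOrder α] [IsOrderedRing α] (a : α) :
    a⁻ * a⁺ = 0 := by
  rcases le_total 0 a with h | h
  · rw [negPart_eq_zero.2 h, zero_mul]
  · rw [posPart_eq_zero.2 h, mul_zero]

section Obtuse

variable {V ι : Type*} [NormedAddCommGroup V] [InnerProductSpace ℝ V] [Fintype ι] {v : ι → V}

lemma inner_sum_smul_sum_smul_nonpos_s5 (hv : Pairwise fun i j => ⟪v i, v j⟫_ℝ ≤ 0)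
    {a c : ι → ℝ} (ha : ∀ i, 0 ≤ a i) (hc : ∀ i, 0 ≤ c i) (hac : ∀ i, a i * c i = 0) :
    ⟪∑ i, a i • v i, ∑ i, c i • v i⟫_ℝ ≤ 0 := by
  rw [sum_inner]
  refine sum_nonpos fun i _ => ?_
  rw [real_inner_smul_left, inner_sum, mul_sum]
  refine sum_nonpos fun j _ => ?_
  rw [real_inner_smul_right]
  rcases eq_or_ne i j with rfl | hij
  · rw [← mul_assoc, hac, zero_mul]
  · exact mul_nonpos_of_nonneg_of_nonpos (ha i) (mul_nonpos_of_nonneg_of_nonpos (hc j) (hv hij))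

theorem LinearIndependent.nonneg_of_inner_sum_nonneg (hli : LinearIndependent ℝ v)
    (hv : Pairwise fun i j => ⟪v i, v j⟫_ℝ ≤ 0) {c : ι → ℝ}
    (hc : ∀ i, c i < 0 → 0 ≤ ⟪∑ j, c j • v j, v i⟫_ℝ) (i : ι) : 0 ≤ c i := by
  set x := ∑ j, c j • v j
  set y := ∑ j, (c j)⁻ • v j
  have hxy : x + y = ∑ j, (c j)⁺ • v j := by
    rw [← sum_add_distrib]
    refine sum_congr rfl fun j _ => ?_
    rw [← add_smul]
    congr 1
    linarith [posPart_sub_negPart (c j)]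
  have hyx : 0 ≤ ⟪y, x⟫_ℝ := by
    rw [sum_inner]
    refine sum_nonneg fun j _ => ?_
    rw [real_inner_smul_left, real_inner_comm]
    rcases lt_or_ge (c j) 0 with h | h
    · exact mul_nonneg (negPart_nonneg _) (hc j h)
    · rw [negPart_eq_zero.2 h, zero_mul]
  have hyxy : ⟪y, x + y⟫_ℝ ≤ 0 := hxy ▸ inner_sum_smul_sum_smul_nonpos_s5 hv
    (fun j => negPart_nonneg _) (fun j => posPart_nonneg _) (fun j => negPart_mul_posPart _)
  have hy : y = 0 := real_inner_self_nonpos.1 (by rw [inner_add_right] at hyxy; linarith)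
  exact negPart_eq_zero.1 (Fintype.linearIndependent_iff.1 hli _ hy i)

end Obtuse

theorem nonneg_combination_of_span_general
    {V ι : Type*} [NormedAddCommGroup V] [InnerProductSpace ℝ V]
    [Fintype ι] (b : Module.Basis ι ℝ V)
    (hobtuse : ∀ i j, i ≠ j → ⟪(b i : V), b j⟫_ℝ ≤ 0)
    (J : Finset ι) (x : V)
    (hx : x ∈ Submodule.span ℝ (⇑b '' (J : Set ι)))
    (hpos : ∀ j ∈ J, 0 ≤ ⟪x, (b j : V)⟫_ℝ) :
    ∃ c : ι → ℝ, (∀ i, 0 ≤ c i) ∧ (∀ i ∉ J, c i = 0) ∧ x = ∑ i, c i • (b i : V) := by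
  have hsupp : ∀ i ∉ J, b.repr x i = 0 := fun i hi =>
    Finsupp.notMem_support_iff.1 fun h => hi (b.mem_span_image.1 hx h)
  have hx_sum : ∑ i, b.repr x i • b i = x := b.sum_repr x
  refine ⟨b.repr x, b.linearIndependent.nonneg_of_inner_sum_nonneg hobtuse fun j hj => ?_,
    hsupp, hx_sum.symm⟩
  rw [hx_sum]
  exact hpos j (by_contra fun hjJ => hj.ne (hsupp j hjJ))

/-- If `x` lies in the span of `{α j : j ∈ J}` and `⟪x, α j⟫ ≥ 0` for all
`j ∈ J`, and the basis is obtuse, then `x` is a non-negative combination of `{α j : j ∈ J}`. -/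
theorem nonneg_combination_of_span
    {V ι : Type*} [NormedAddCommGroup V] [InnerProductSpace ℝ V] [FiniteDimensional ℝ V]
    [Fintype ι] (b : Module.Basis ι ℝ V)
    (hobtuse : ∀ i j, i ≠ j → ⟪(b i : V), b j⟫_ℝ ≤ 0)
    (J : Finset ι) (x : V)
    (hx : x ∈ Submodule.span ℝ (⇑b '' (J : Set ι)))
    (hpos : ∀ j ∈ J, 0 ≤ ⟪x, (b j : V)⟫_ℝ) :
    ∃ c : ι → ℝ, (∀ i, 0 ≤ c i) ∧ (∀ i ∉ J, c i = 0) ∧ x = ∑ i, c i • (b i : V) :=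
  nonneg_combination_of_span_general b hobtuse J x hx hpos
end

section
/- Assume ⟨α_i, α_j⟩ ≤ 0 for i ≠ j. For each i ∉ J, pr_J(α_i) = α_i + x where x ∈ V_J satisfies ⟨x, α_j⟩ = −⟨α_i, α_j⟩ for all j ∈ J, and moreover pr_J(α_i) ∈ V^pos. -/
open scoped InnerProductSpace
open Finset

/-!
Write `pr_J(α_i) = α_i + x` with `x ∈ V_J`. Orthogonality to `V_J` gives
`⟪x, α_j⟫ = -⟪α_i, α_j⟫ ≥ 0` for `j ∈ J`, so `x` pairs non-negatively with every basis vector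
on its support. For an obtuse basis this forces non-negative coordinates: splitting
`x = x⁺ - x⁻` along the coordinates, `‖x⁻‖² = ⟪x⁺, x⁻⟫ - ⟪x, x⁻⟫ ≤ 0`, because `x⁺` and `x⁻`
are combinations of distinct basis vectors and `x⁻` lives where `x` pairs non-negatively.
-/

section Obtuse

variable {V ι : Type*} [NormedAddCommGroup V] [InnerProductSpace ℝ V] [Fintype ι]

theorem inner_sum_smul_nonpos_of_disjoint {v : ι → V}
    (hobtuse : ∀ i j, i ≠ j → ⟪v i, v j⟫_ℝ ≤ 0) {c d : ι → ℝ}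
    (hc : ∀ k, 0 ≤ c k) (hd : ∀ k, 0 ≤ d k) (hcd : ∀ k, c k = 0 ∨ d k = 0) :
    ⟪∑ k, c k • v k, ∑ l, d l • v l⟫_ℝ ≤ 0 := by
  simp only [sum_inner, inner_sum, real_inner_smul_left, real_inner_smul_right]
  refine sum_nonpos fun l _ => sum_nonpos fun k _ => ?_
  by_cases hkl : k = l
  · subst hkl
    rcases hcd k with h | h <;> simp [h]
  · exact mul_nonpos_of_nonneg_of_nonpos (hd l)
      (mul_nonpos_of_nonneg_of_nonpos (hc k) (hobtuse k l hkl))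

theorem Module.Basis.repr_nonneg_of_inner_nonneg (b : Module.Basis ι ℝ V)
    (hobtuse : ∀ i j, i ≠ j → ⟪b i, b j⟫_ℝ ≤ 0) {x : V}
    (hx : ∀ k, b.repr x k < 0 → 0 ≤ ⟪x, b k⟫_ℝ) (k : ι) :
    0 ≤ b.repr x k := by
  set c : ι → ℝ := fun k => b.repr x k
  set xneg : V := ∑ k, (c k)⁻ • b k
  have hx_split : x = ∑ k, (c k)⁺ • b k - xneg := by
    simp only [xneg, ← sum_sub_distrib, ← sub_smul, posPart_sub_negPart, c, b.sum_repr]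
  have hpos_neg : ⟪∑ k, (c k)⁺ • b k, xneg⟫_ℝ ≤ 0 := by
    refine inner_sum_smul_nonpos_of_disjoint hobtuse (fun k => posPart_nonneg _)
      (fun k => negPart_nonneg _) fun k => ?_
    rcases le_total (c k) 0 with h | h
    · exact .inl (posPart_eq_zero.mpr h)
    · exact .inr (negPart_eq_zero.mpr h)
  have hx_neg : 0 ≤ ⟪x, xneg⟫_ℝ := by
    simp only [xneg, inner_sum, real_inner_smul_right]
    refine sum_nonneg fun k _ => ?_
    rcases lt_or_ge (c k) 0 with h | h
    · exact mul_nonneg (negPart_nonneg _) (hx k h)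
    · simp [negPart_eq_zero.mpr h]
  have hxneg_zero : xneg = 0 := by
    refine real_inner_self_nonpos.mp ?_
    have : ⟪xneg, xneg⟫_ℝ = ⟪∑ k, (c k)⁺ • b k, xneg⟫_ℝ - ⟪x, xneg⟫_ℝ := by
      rw [hx_split, inner_sub_left]; ring
    linarith
  exact negPart_eq_zero.mp
    (Fintype.linearIndependent_iff.mp b.linearIndependent _ hxneg_zero k)

theorem Module.Basis.mem_coneGen_of_repr_nonneg (b : Module.Basis ι ℝ V) {y : V}
    (hy : ∀ k, 0 ≤ b.repr y k) : y ∈ coneGen b :=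
  ⟨fun k => b.repr y k, hy, (b.sum_repr y).symm⟩

end Obtuse

theorem projection_of_basis_vector_general
    {V ι : Type*} [NormedAddCommGroup V] [InnerProductSpace ℝ V]
    [Fintype ι] (b : Module.Basis ι ℝ V)
    (hobtuse : ∀ i j, i ≠ j → ⟪(b i : V), b j⟫_ℝ ≤ 0)
    (J : Finset ι) (p : V → V)
    (hp : ∀ v : V, p v ∈ (Submodule.span ℝ (⇑b '' (J : Set ι)))ᗮ ∧
      v - p v ∈ Submodule.span ℝ (⇑b '' (J : Set ι)))
    (i : ι) (hi : i ∉ J) :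
    (∃ x ∈ Submodule.span ℝ (⇑b '' (J : Set ι)),
        (∀ j ∈ J, ⟪x, (b j : V)⟫_ℝ = -⟪(b i : V), (b j : V)⟫_ℝ) ∧
        p (b i) = b i + x) ∧
      p (b i) ∈ coneGen (⇑b) := by
  obtain ⟨hperp, hspan⟩ := hp (b i)
  set x : V := p (b i) - b i
  have hx_mem : x ∈ Submodule.span ℝ (⇑b '' (J : Set ι)) := by
    simpa only [x, neg_sub] using Submodule.neg_mem _ hspan
  have hx_inner : ∀ j ∈ J, ⟪x, b j⟫_ℝ = -⟪b i, b j⟫_ℝ := fun j hj => by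
    have h0 := (Submodule.mem_orthogonal' _ _).mp hperp (b j) (Submodule.subset_span ⟨j, hj, rfl⟩)
    rw [inner_sub_left, h0, zero_sub]
  have hx_repr : ∀ k, 0 ≤ b.repr x k := by
    refine b.repr_nonneg_of_inner_nonneg hobtuse fun k hk => ?_
    have hkJ : k ∈ J := b.mem_span_image.mp hx_mem (Finsupp.mem_support_iff.mpr hk.ne)
    rw [hx_inner k hkJ, neg_nonneg]
    exact hobtuse i k (ne_of_mem_of_not_mem hkJ hi).symm
  have hp_eq : p (b i) = b i + x := (add_sub_cancel _ _).symm
  refine ⟨⟨x, hx_mem, hx_inner, hp_eq⟩, b.mem_coneGen_of_repr_nonneg fun k => ?_⟩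
  rw [hp_eq, map_add, b.repr_self, Finsupp.add_apply]
  exact add_nonneg (Finsupp.single_nonneg.mpr zero_le_one k) (hx_repr k)

/-- For an obtuse basis and `i ∉ J`, `pr_J(α i) = α i + x` where `x ∈ V_J`
satisfies `⟪x, α j⟫ = -⟪α i, α j⟫` for all `j ∈ J`, and moreover `pr_J(α i) ∈ V^pos`. -/
theorem projection_of_basis_vector
    {V ι : Type*} [NormedAddCommGroup V] [InnerProductSpace ℝ V] [FiniteDimensional ℝ V]
    [Fintype ι] (b : Module.Basis ι ℝ V)
    (hobtuse : ∀ i j, i ≠ j → ⟪(b i : V), b j⟫_ℝ ≤ 0)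
    (J : Finset ι) (p : V → V)
    (hp : ∀ v : V, p v ∈ (Submodule.span ℝ (⇑b '' (J : Set ι)))ᗮ ∧
      v - p v ∈ Submodule.span ℝ (⇑b '' (J : Set ι)))
    (i : ι) (hi : i ∉ J) :
    (∃ x ∈ Submodule.span ℝ (⇑b '' (J : Set ι)),
        (∀ j ∈ J, ⟪x, (b j : V)⟫_ℝ = -⟪(b i : V), (b j : V)⟫_ℝ) ∧
        p (b i) = b i + x) ∧
      p (b i) ∈ coneGen (⇑b) :=
  projection_of_basis_vector_general b hobtuse J p hp i hi
end

section
/- Assume ⟨α_i, α_j⟩ ≤ 0 for i ≠ j. Then for every x ∈ V, 𝔏(x) is the least element of the set { y ∈ V⁺ : y ≥ x } with respect to the partial order defined by V^pos. -/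
open scoped InnerProductSpace
open Finset

/-!
The closest point `Lx` of the cone `V⁺` satisfies the variational inequalities of a projection
onto a cone: `⟪x - Lx, ω i⟫ ≤ 0`, i.e. `d = Lx - x ≥ 0`, and `⟪d, Lx⟫ = 0`. Expanding the latter
in the basis gives complementary slackness: wherever `d` has a positive `α_i`-coordinate,
`⟪α_i, Lx⟫ = 0`. So for `z ∈ V⁺` with `z ≥ x`, the vector `w = z - Lx` satisfies
`⟪α_i, w⟫ = ⟪α_i, z⟫ ≥ 0` at every `i` where its `α_i`-coordinate is negative. For an obtuse basis
this forces `w ≥ 0`: the negative part `u` of `w` has `⟪u, w⁺⟫ ≤ 0` (cross terms only) and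
`⟪u, w⟫ ≥ 0`, hence `‖u‖² = ⟪u, w⁺⟫ - ⟪u, w⟫ ≤ 0`.
-/

theorem negPart_mul_posPart_eq_zero (a : ℝ) : a⁻ * a⁺ = 0 := by
  rcases le_total a 0 with h | h
  · rw [posPart_eq_zero.2 h, mul_zero]
  · rw [negPart_eq_zero.2 h, zero_mul]

section Module

variable {V ι : Type*} [AddCommGroup V] [Module ℝ V] [Fintype ι]

theorem coneGen_eq_hull (v : ι → V) : coneGen v = PointedCone.hull ℝ (Set.range v) := by
  ext x
  rw [SetLike.mem_coe, Submodule.mem_span_range_iff_exists_fun]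
  constructor
  · rintro ⟨c, hc, rfl⟩
    exact ⟨fun i => ⟨c i, hc i⟩, rfl⟩
  · rintro ⟨c, rfl⟩
    exact ⟨fun i => c i, fun i => (c i).2, rfl⟩

theorem mem_coneGen_basis_iff (b : Module.Basis ι ℝ V) {v : V} :
    v ∈ coneGen b ↔ ∀ i, 0 ≤ b.repr v i := by
  constructor
  · rintro ⟨c, hc, rfl⟩
    rwa [b.repr_sum_self]
  · exact fun h => ⟨fun i => b.repr v i, h, (b.sum_repr v).symm⟩

end Module

namespace IsClosestPoint

variable {V : Type*} [NormedAddCommGroup V] [InnerProductSpace ℝ V] {x y : V}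

theorem inner_sub_nonpos {K : Set V} (hK : Convex ℝ K) (h : IsClosestPoint K x y) {z : V}
    (hz : z ∈ K) : ⟪x - y, z - y⟫_ℝ ≤ 0 := by
  have : Nonempty K := ⟨⟨y, h.1⟩⟩
  refine (norm_eq_iInf_iff_real_inner_le_zero hK h.1).1 ?_ z hz
  refine le_antisymm (le_ciInf fun w => ?_) (ciInf_le ⟨0, ?_⟩ (⟨y, h.1⟩ : K))
  · simpa only [dist_eq_norm] using h.2 w w.2
  · rintro _ ⟨w, rfl⟩
    exact norm_nonneg _

variable {C : PointedCone ℝ V}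

theorem inner_nonpos_of_mem_cone (h : IsClosestPoint C x y) {w : V} (hw : w ∈ C) :
    ⟪x - y, w⟫_ℝ ≤ 0 := by
  simpa using h.inner_sub_nonpos C.convex (C.add_mem h.1 hw)

theorem inner_eq_zero_of_cone (h : IsClosestPoint C x y) : ⟪x - y, y⟫_ℝ = 0 := by
  have h0 : ⟪x - y, 0 - y⟫_ℝ ≤ 0 := h.inner_sub_nonpos C.convex C.zero_mem
  rw [zero_sub, inner_neg_right] at h0
  exact le_antisymm (h.inner_nonpos_of_mem_cone h.1) (neg_nonpos.1 h0)

end IsClosestPoint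

section InnerProduct

variable {V ι : Type*} [NormedAddCommGroup V] [InnerProductSpace ℝ V] [Fintype ι]

theorem inner_sum_smul_nonpos_of_obtuse {b : ι → V} (hobtuse : ∀ i j, i ≠ j → ⟪b i, b j⟫_ℝ ≤ 0)
    {p n : ι → ℝ} (hp : ∀ i, 0 ≤ p i) (hn : ∀ i, 0 ≤ n i) (hpn : ∀ i, n i * p i = 0) :
    ⟪∑ i, n i • b i, ∑ j, p j • b j⟫_ℝ ≤ 0 := by
  rw [sum_inner]
  refine sum_nonpos fun i _ => ?_
  rw [inner_sum]
  refine sum_nonpos fun j _ => ?_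
  rw [real_inner_smul_left, real_inner_smul_right]
  obtain rfl | hij := eq_or_ne i j
  · rw [← mul_assoc, hpn, zero_mul]
  · exact mul_nonpos_of_nonneg_of_nonpos (hn i)
      (mul_nonpos_of_nonneg_of_nonpos (hp j) (hobtuse i j hij))

theorem Module.Basis.inner_eq_sum_repr_mul (b : Module.Basis ι ℝ V) (u y : V) :
    ⟪u, y⟫_ℝ = ∑ i, b.repr u i * ⟪b i, y⟫_ℝ := by
  conv_lhs => rw [← b.sum_repr u]
  simp only [sum_inner, real_inner_smul_left]

theorem Module.Basis.repr_nonneg_of_obtuse (b : Module.Basis ι ℝ V)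
    (hobtuse : ∀ i j, i ≠ j → ⟪b i, b j⟫_ℝ ≤ 0) {w : V}
    (hw : ∀ i, b.repr w i < 0 → 0 ≤ ⟪b i, w⟫_ℝ) (i : ι) : 0 ≤ b.repr w i := by
  set c := b.repr w
  set u := ∑ i, (c i)⁻ • b i
  have hw_eq : w = ∑ i, (c i)⁺ • b i - u := by
    conv_lhs => rw [← b.sum_repr w]
    simp only [u, ← sum_sub_distrib, ← sub_smul, posPart_sub_negPart, c]
  have hcross : ⟪u, ∑ i, (c i)⁺ • b i⟫_ℝ ≤ 0 :=
    inner_sum_smul_nonpos_of_obtuse hobtuse (fun i => posPart_nonneg _)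
      (fun i => negPart_nonneg _) (fun i => negPart_mul_posPart_eq_zero _)
  have huw : 0 ≤ ⟪u, w⟫_ℝ := by
    rw [b.inner_eq_sum_repr_mul, b.repr_sum_self]
    refine sum_nonneg fun i _ => ?_
    rcases (negPart_nonneg (c i)).eq_or_lt with h | h
    · rw [← h, zero_mul]
    · exact mul_nonneg h.le (hw i (negPart_pos_iff.1 h))
  have hu : u = 0 := by
    have huu : ⟪u, u⟫_ℝ = ⟪u, ∑ i, (c i)⁺ • b i⟫_ℝ - ⟪u, w⟫_ℝ := by
      conv_rhs => rw [hw_eq, inner_sub_right]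
      ring
    exact real_inner_self_nonpos.1 (by linarith)
  have hci : b.repr u i = (c i)⁻ := congrFun (b.repr_sum_self fun i => (c i)⁻) i
  rw [hu, map_zero, Finsupp.zero_apply] at hci
  exact negPart_eq_zero.1 hci.symm

theorem Module.Basis.repr_sub_nonneg_of_complementary (b : Module.Basis ι ℝ V)
    (hobtuse : ∀ i j, i ≠ j → ⟪b i, b j⟫_ℝ ≤ 0) {x y z : V}
    (hy : ∀ i, 0 ≤ ⟪b i, y⟫_ℝ) (hyx : ∀ i, 0 ≤ b.repr (y - x) i) (hcompl : ⟪y - x, y⟫_ℝ = 0)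
    (hz : ∀ i, 0 ≤ ⟪b i, z⟫_ℝ) (hzx : ∀ i, 0 ≤ b.repr (z - x) i) (i : ι) :
    0 ≤ b.repr (z - y) i := by
  have hslack : ∀ j, b.repr (y - x) j * ⟪b j, y⟫_ℝ = 0 := by
    rw [b.inner_eq_sum_repr_mul] at hcompl
    exact fun j => (sum_eq_zero_iff_of_nonneg fun k _ => mul_nonneg (hyx k) (hy k)).1 hcompl j
      (mem_univ j)
  refine b.repr_nonneg_of_obtuse hobtuse (fun j hj => ?_) i
  have hpos : 0 < b.repr (y - x) j := by
    rw [show z - y = (z - x) - (y - x) by abel, map_sub, Finsupp.sub_apply] at hj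
    linarith [hzx j]
  have hyj : ⟪b j, y⟫_ℝ = 0 := (mul_eq_zero.1 (hslack j)).resolve_left hpos.ne'
  rw [inner_sub_right, hyj, sub_zero]
  exact hz j

end InnerProduct

section Dual

variable {V ι : Type*} [NormedAddCommGroup V] [InnerProductSpace ℝ V] [DecidableEq ι]
  {b : Module.Basis ι ℝ V} {ω : ι → V}

theorem Module.Basis.repr_eq_inner_of_dual (hω : ∀ i j, ⟪ω i, b j⟫_ℝ = if i = j then 1 else 0)
    (v : V) (i : ι) : b.repr v i = ⟪ω i, v⟫_ℝ := by
  have : b.coord i = innerₗ V (ω i) := b.ext fun j => by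
    simp [hω, Finsupp.single_apply, eq_comm]
  exact LinearMap.congr_fun this v

theorem inner_nonneg_of_mem_coneGen_dual [Fintype ι]
    (hω : ∀ i j, ⟪ω i, b j⟫_ℝ = if i = j then 1 else 0) {y : V} (hy : y ∈ coneGen ω) (i : ι) :
    0 ≤ ⟪b i, y⟫_ℝ := by
  obtain ⟨c, hc, rfl⟩ := hy
  rw [inner_sum]
  simp_rw [real_inner_smul_right, ← real_inner_comm (b i), hω]
  simpa using hc i

end Dual

theorem langlands_retraction_least_general
    {V ι : Type*} [NormedAddCommGroup V] [InnerProductSpace ℝ V]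
    [Fintype ι] [DecidableEq ι] (b : Module.Basis ι ℝ V) (ω : ι → V)
    (hω : ∀ i j, ⟪ω i, b j⟫_ℝ = if i = j then 1 else 0)
    (hobtuse : ∀ i j, i ≠ j → ⟪(b i : V), b j⟫_ℝ ≤ 0)
    (x Lx : V) (hLx : IsClosestPoint (coneGen ω) x Lx) :
    Lx ∈ coneGen ω ∧ Lx - x ∈ coneGen (⇑b) ∧
      ∀ z, z ∈ coneGen ω → z - x ∈ coneGen (⇑b) → z - Lx ∈ coneGen (⇑b) := by
  have hproj : IsClosestPoint (PointedCone.hull ℝ (Set.range ω)) x Lx := coneGen_eq_hull ω ▸ hLx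
  have hLx_x : ∀ i, 0 ≤ b.repr (Lx - x) i := fun i => by
    rw [b.repr_eq_inner_of_dual hω, real_inner_comm, ← neg_sub, inner_neg_left, neg_nonneg]
    exact hproj.inner_nonpos_of_mem_cone (PointedCone.subset_hull ⟨i, rfl⟩)
  have hcompl : ⟪Lx - x, Lx⟫_ℝ = 0 := by
    rw [← neg_sub, inner_neg_left, hproj.inner_eq_zero_of_cone, neg_zero]
  refine ⟨hLx.1, (mem_coneGen_basis_iff b).2 hLx_x, fun z hz hzx => ?_⟩
  rw [mem_coneGen_basis_iff] at hzx ⊢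
  exact b.repr_sub_nonneg_of_complementary hobtuse (inner_nonneg_of_mem_coneGen_dual hω hLx.1)
    hLx_x hcompl (inner_nonneg_of_mem_coneGen_dual hω hz) hzx

/-- For an obtuse basis, `𝔏(x)` is the least element of `{y ∈ V⁺ | y ≥ x}`
with respect to the partial order defined by `V^pos`. -/
theorem langlands_retraction_least
    {V ι : Type*} [NormedAddCommGroup V] [InnerProductSpace ℝ V] [FiniteDimensional ℝ V]
    [Fintype ι] [DecidableEq ι] (b : Module.Basis ι ℝ V) (ω : ι → V)
    (hω : ∀ i j, ⟪ω i, b j⟫_ℝ = if i = j then 1 else 0)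
    (hobtuse : ∀ i j, i ≠ j → ⟪(b i : V), b j⟫_ℝ ≤ 0)
    (x Lx : V) (hLx : IsClosestPoint (coneGen ω) x Lx) :
    Lx ∈ coneGen ω ∧ Lx - x ∈ coneGen (⇑b) ∧
      ∀ z, z ∈ coneGen ω → z - x ∈ coneGen (⇑b) → z - Lx ∈ coneGen (⇑b) :=
  langlands_retraction_least_general b ω hω hobtuse x Lx hLx
end

section
/- Assume ⟨α_i, α_j⟩ ≤ 0 for i ≠ j. Then for any x ∈ V, the set { y ∈ V⁺ : y ≥ x } is nonempty and has a least element (its infimum belongs to the set). -/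
open scoped InnerProductSpace
open Finset

/-! Let `m` be the metric projection of `x` onto the closed convex cone `V⁺`: then `x - m` is
orthogonal to `m` and pairs non-positively with `V⁺`. As `V⁺` contains the dual basis, the latter
says `m ≥ x`. Given `z ∈ V⁺` with `z ≥ x`, split `z - m = p - n` with `p, n ≥ 0` of disjoint
supports. Obtuseness gives `⟪n, p⟫ ≤ 0`; `z ∈ V⁺` gives `⟪n, z⟫ ≥ 0`; and `0 ≤ n ≤ m - x` with
`m ∈ V⁺` gives `⟪n, m⟫ ≤ ⟪m - x, m⟫ = 0`. So `‖n‖² = ⟪n, p⟫ - ⟪n, z⟫ + ⟪n, m⟫ ≤ 0`, i.e. `z ≥ m`. -/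

theorem ProperCone.exists_moreau_decomposition {E : Type*} [NormedAddCommGroup E]
    [InnerProductSpace ℝ E] [CompleteSpace E] (C : ProperCone ℝ E) (x : E) :
    ∃ m ∈ C, ⟪x - m, m⟫_ℝ = 0 ∧ ∀ y ∈ C, ⟪x - m, y⟫_ℝ ≤ 0 := by
  obtain ⟨m, hm, hmin⟩ :=
    exists_norm_eq_iInf_of_complete_convex C.nonempty C.isClosed.isComplete C.convex x
  have hvar := (norm_eq_iInf_iff_real_inner_le_zero C.convex hm).1 hmin
  have h0 : ⟪x - m, 0 - m⟫_ℝ ≤ 0 := hvar 0 (zero_mem C)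
  have h2 : ⟪x - m, (2 : ℝ) • m - m⟫_ℝ ≤ 0 := hvar _ (C.smul_mem hm zero_le_two)
  refine ⟨m, hm, ?_, fun y hy => ?_⟩
  · rw [zero_sub, inner_neg_right] at h0
    rw [two_smul, add_sub_cancel_right] at h2
    linarith
  · simpa using hvar (y + m) (add_mem hy hm)

lemma Module.Basis.exists_inner_eq_repr
    {V ι : Type*} [NormedAddCommGroup V] [InnerProductSpace ℝ V]
    [FiniteDimensional ℝ V] (b : Module.Basis ι ℝ V) :
    ∃ β : ι → V, ∀ i v, ⟪β i, v⟫_ℝ = b.repr v i :=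
  ⟨fun i => (InnerProductSpace.toDual ℝ V).symm (b.coord i).toContinuousLinearMap,
    fun i v => by simp [InnerProductSpace.toDual_symm_apply]⟩

section coneGen

variable {V ι : Type*} [Fintype ι]

lemma mem_coneGen_iff_repr [AddCommGroup V] [Module ℝ V] (b : Module.Basis ι ℝ V) {v : V} :
    v ∈ coneGen ⇑b ↔ ∀ i, 0 ≤ b.repr v i := by
  classical
  constructor
  · rintro ⟨c, hc, rfl⟩ i
    simpa [map_sum, Finsupp.single_apply] using hc i
  · intro h
    exact ⟨fun i => b.repr v i, h, (b.sum_repr v).symm⟩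

lemma Module.Basis.eq_sum_posPart_sub_sum_negPart [AddCommGroup V] [Module ℝ V]
    (b : Module.Basis ι ℝ V) (u : V) :
    u = ∑ i, (b.repr u i)⁺ • b i - ∑ i, (b.repr u i)⁻ • b i := by
  rw [← sum_sub_distrib]
  simp_rw [← sub_smul, posPart_sub_negPart]
  exact (b.sum_repr u).symm

variable [NormedAddCommGroup V] [InnerProductSpace ℝ V]

lemma inner_nonneg_of_mem_coneGen {v : ι → V} {u y : V} (hu : u ∈ coneGen v)
    (hy : ∀ i, 0 ≤ ⟪y, v i⟫_ℝ) : 0 ≤ ⟪u, y⟫_ℝ := by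
  obtain ⟨c, hc, rfl⟩ := hu
  rw [sum_inner]
  exact sum_nonneg fun i _ => by
    rw [real_inner_smul_left, real_inner_comm]; exact mul_nonneg (hc i) (hy i)

lemma inner_sum_smul_nonpos_of_obtuse_s11 {v : ι → V} (hv : ∀ i j, i ≠ j → ⟪v i, v j⟫_ℝ ≤ 0)
    {a c : ι → ℝ} (ha : ∀ i, 0 ≤ a i) (hc : ∀ i, 0 ≤ c i) (hac : ∀ i, a i * c i = 0) :
    ⟪∑ i, a i • v i, ∑ j, c j • v j⟫_ℝ ≤ 0 := by
  simp_rw [sum_inner, inner_sum, real_inner_smul_left, real_inner_smul_right]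
  refine sum_nonpos fun i _ => sum_nonpos fun j _ => ?_
  rcases eq_or_ne i j with rfl | hij
  · rw [← mul_assoc, hac, zero_mul]
  · exact mul_nonpos_of_nonneg_of_nonpos (ha i)
      (mul_nonpos_of_nonneg_of_nonpos (hc j) (hv i j hij))

lemma mem_coneGen_of_forall_inner_nonneg [FiniteDimensional ℝ V] (b : Module.Basis ι ℝ V)
    {u : V} (h : ∀ y, (∀ i, 0 ≤ ⟪y, b i⟫_ℝ) → 0 ≤ ⟪u, y⟫_ℝ) : u ∈ coneGen ⇑b := by
  classical
  obtain ⟨β, hβ⟩ := b.exists_inner_eq_repr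
  rw [mem_coneGen_iff_repr]
  intro i
  have hβ_pos : ∀ j, 0 ≤ ⟪β i, b j⟫_ℝ := fun j => by
    rw [hβ, b.repr_self, Finsupp.single_apply]; split_ifs <;> norm_num
  rw [← hβ i u, real_inner_comm]
  exact h (β i) hβ_pos

lemma sub_mem_coneGen_of_inner_eq_zero (b : Module.Basis ι ℝ V)
    (hobtuse : ∀ i j, i ≠ j → ⟪(b i : V), b j⟫_ℝ ≤ 0) {x m z : V}
    (hm : ∀ i, 0 ≤ ⟪m, (b i : V)⟫_ℝ) (hmx : m - x ∈ coneGen ⇑b) (horth : ⟪m - x, m⟫_ℝ = 0)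
    (hz : ∀ i, 0 ≤ ⟪z, (b i : V)⟫_ℝ) (hzx : z - x ∈ coneGen ⇑b) :
    z - m ∈ coneGen ⇑b := by
  set c := b.repr (z - m)
  set n := ∑ i, (c i)⁻ • b i
  have hdecomp : z - m = ∑ i, (c i)⁺ • b i - n := b.eq_sum_posPart_sub_sum_negPart _
  have hn_m : ⟪n, m⟫_ℝ ≤ 0 := by
    have hle : m - x - n ∈ coneGen ⇑b := by
      refine ⟨fun i => b.repr (m - x) i - (c i)⁻, fun i => ?_, ?_⟩
      · have hc : c i = b.repr (z - x) i - b.repr (m - x) i := by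
          simp only [c, ← Finsupp.sub_apply, ← map_sub, sub_sub_sub_cancel_right]
        have hd := (mem_coneGen_iff_repr b).1 hmx i
        have he := (mem_coneGen_iff_repr b).1 hzx i
        rw [sub_nonneg, negPart_def]
        exact sup_le (by linarith) hd
      · simp only [sub_smul, sum_sub_distrib, b.sum_repr, n]
    have := inner_nonneg_of_mem_coneGen hle hm
    rw [inner_sub_left, horth] at this
    linarith
  have hn_pos : ⟪n, z - m + n⟫_ℝ ≤ 0 := by
    rw [hdecomp, sub_add_cancel]
    refine inner_sum_smul_nonpos_of_obtuse_s11 hobtuse (fun i => negPart_nonneg _)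
      (fun i => posPart_nonneg _) fun i => ?_
    rcases le_total 0 (c i) with h | h <;> simp [h]
  have hn_z : 0 ≤ ⟪n, z⟫_ℝ :=
    inner_nonneg_of_mem_coneGen ⟨_, fun i => negPart_nonneg _, rfl⟩ hz
  have hn : n = 0 := by
    have : ⟪n, n⟫_ℝ ≤ 0 := by
      rw [inner_add_right, inner_sub_right] at hn_pos; linarith
    exact inner_self_eq_zero.1 (le_antisymm this real_inner_self_nonneg)
  rw [hdecomp, hn, sub_zero]
  exact ⟨_, fun i => posPart_nonneg _, rfl⟩

end coneGen

/-- For an obtuse basis, for every `x` the set `{y ∈ V⁺ | y ≥ x}` is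
nonempty and has a least element. -/
theorem least_majorant_exists
    {V ι : Type*} [NormedAddCommGroup V] [InnerProductSpace ℝ V] [FiniteDimensional ℝ V]
    [Fintype ι] (b : Module.Basis ι ℝ V)
    (hobtuse : ∀ i j, i ≠ j → ⟪(b i : V), b j⟫_ℝ ≤ 0)
    (x : V) :
    ∃ m, ((∀ i, 0 ≤ ⟪m, (b i : V)⟫_ℝ) ∧ m - x ∈ coneGen (⇑b)) ∧
      ∀ z, (∀ i, 0 ≤ ⟪z, (b i : V)⟫_ℝ) → z - x ∈ coneGen (⇑b) → z - m ∈ coneGen (⇑b) := by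
  set C := ProperCone.innerDual (Set.range ⇑b)
  have mem_C : ∀ y, y ∈ C ↔ ∀ i, 0 ≤ ⟪y, b i⟫_ℝ := by
    simp [C, real_inner_comm]
  obtain ⟨m, hmC, horth, hpolar⟩ := C.exists_moreau_decomposition x
  have hmx : m - x ∈ coneGen ⇑b := mem_coneGen_of_forall_inner_nonneg b fun y hy => by
    rw [← neg_sub, inner_neg_left, neg_nonneg]
    exact hpolar y ((mem_C y).2 hy)
  refine ⟨m, ⟨(mem_C m).1 hmC, hmx⟩, fun z hz hzx => ?_⟩
  refine sub_mem_coneGen_of_inner_eq_zero b hobtuse ((mem_C m).1 hmC) hmx ?_ hz hzx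
  rw [← neg_sub, inner_neg_left, horth, neg_zero]
end

section
/- For each J ⊆ Γ, the cone K_J is a simplicial cone of full dimension in V, i.e., the vectors {ω_j : j ∉ J} ∪ {−α_i : i ∈ J} form a basis of V. -/
open scoped InnerProductSpace
open Finset

/-!
If `⟪ω i, b j⟫ = δᵢⱼ`, a vanishing combination of the mixed family splits as
`∑_{i ∉ J} gᵢ ωᵢ = ∑_{i ∈ J} gᵢ bᵢ`. The two sides are orthogonal, since their index sets are
disjoint, so both vanish; pairing with `b i`, resp. `ω i`, then reads off each coefficient.
A linearly independent family of `dim V` vectors is a basis.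
-/

section Biorthogonal

variable {E ι : Type*} [NormedAddCommGroup E] [InnerProductSpace ℝ E] [DecidableEq ι]
  {ω b : ι → E}

theorem inner_sum_smul_of_biorthogonal
    (hωb : ∀ i j, ⟪ω i, b j⟫_ℝ = if i = j then 1 else 0) (t : Finset ι) (g : ι → ℝ) (i : ι) :
    ⟪ω i, ∑ j ∈ t, g j • b j⟫_ℝ = if i ∈ t then g i else 0 := by
  simp [inner_sum, real_inner_smul_right, hωb]

theorem sum_smul_inner_of_biorthogonal
    (hωb : ∀ i j, ⟪ω i, b j⟫_ℝ = if i = j then 1 else 0) (s : Finset ι) (f : ι → ℝ) (j : ι) :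
    ⟪∑ i ∈ s, f i • ω i, b j⟫_ℝ = if j ∈ s then f j else 0 := by
  simp [sum_inner, real_inner_smul_left, hωb]

theorem sum_smul_inner_sum_smul_eq_zero_of_biorthogonal
    (hωb : ∀ i j, ⟪ω i, b j⟫_ℝ = if i = j then 1 else 0) {s t : Finset ι} (hst : Disjoint s t)
    (f g : ι → ℝ) :
    ⟪∑ i ∈ s, f i • ω i, ∑ j ∈ t, g j • b j⟫_ℝ = 0 := by
  rw [sum_inner]
  refine sum_eq_zero fun i hi => ?_
  rw [real_inner_smul_left, inner_sum_smul_of_biorthogonal hωb,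
    if_neg (disjoint_left.mp hst hi), mul_zero]

theorem linearIndependent_ite_neg_of_biorthogonal
    (hωb : ∀ i j, ⟪ω i, b j⟫_ℝ = if i = j then 1 else 0) (p : ι → Prop) [DecidablePred p] :
    LinearIndependent ℝ (fun i => if p i then -b i else ω i) := by
  rw [linearIndependent_iff']
  intro s g hg i hi
  set u := ∑ j ∈ s with p j, g j • b j with hu_def
  set w := ∑ j ∈ s with ¬p j, g j • ω j with hw_def
  have hwu : w = u := by
    have hsplit : ∑ j ∈ s, g j • (if p j then -b j else ω j) = -u + w := by
      simp only [smul_ite, smul_neg, sum_ite, sum_neg_distrib, u, w]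
    rw [hsplit, neg_add_eq_zero] at hg
    exact hg.symm
  have hu : u = 0 := by
    rw [← inner_self_eq_zero (𝕜 := ℝ)]
    nth_rewrite 1 [← hwu]
    exact sum_smul_inner_sum_smul_eq_zero_of_biorthogonal hωb
      (disjoint_filter_filter_not s s p).symm g g
  by_cases hpi : p i
  · have h := inner_sum_smul_of_biorthogonal hωb (s.filter p) g i
    rwa [← hu_def, hu, inner_zero_right, if_pos (mem_filter.mpr ⟨hi, hpi⟩), eq_comm] at h
  · have h := sum_smul_inner_of_biorthogonal hωb (s.filter (¬p ·)) g i
    rwa [← hw_def, hwu, hu, inner_zero_left, if_pos (mem_filter.mpr ⟨hi, hpi⟩), eq_comm] at h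

end Biorthogonal

/-- For each `J ⊆ Γ`, the cone `K_J` is simplicial of full dimension:
the vectors `{ω j : j ∉ J} ∪ {-α i : i ∈ J}` form a basis of `V`. -/
theorem cone_simplicial
    {V ι : Type*} [NormedAddCommGroup V] [InnerProductSpace ℝ V] [FiniteDimensional ℝ V]
    [Fintype ι] [DecidableEq ι] (b : Module.Basis ι ℝ V) (ω : ι → V)
    (hω : ∀ i j, ⟪ω i, b j⟫_ℝ = if i = j then 1 else 0)
    (J : Finset ι) :
    LinearIndependent ℝ (fun i => if i ∈ J then -(b i : V) else ω i) ∧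
      Submodule.span ℝ (Set.range (fun i => if i ∈ J then -(b i : V) else ω i)) = ⊤ := by
  have hli := linearIndependent_ite_neg_of_biorthogonal hω (· ∈ J)
  exact ⟨hli, hli.span_eq_top_of_card_eq_finrank' (Module.finrank_eq_card_basis b).symm⟩
end

section
/- For each J ⊆ Γ and each x ∈ K_J, the Langlands retraction satisfies 𝔏(x) = pr_J(x), where pr_J is the orthogonal projection onto V_J^⊥ with kernel V_J. In particular 𝔏 is linear on each cone K_J. -/
open scoped InnerProductSpace
open Finset

/-!
Write `x = z - m` with `z = ∑_{i ∉ J} cᵢ ωᵢ ∈ V⁺ ∩ V_Jᗮ` and `m = ∑_{i ∈ J} cᵢ αᵢ ∈ V_J`.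
Since `⟪αᵢ, ω_j⟫ ≥ 0`, the vector `m` pairs non-negatively with `V⁺`, so for every `w ∈ V⁺`
the angle at `z` between `x` and `w` is obtuse: `⟪x - z, w - z⟫ = -⟪m, w⟫ ≤ 0`.
Hence `z` is the unique closest point of `V⁺` to `x`, and `z = pr_J x` because `z ∈ V_Jᗮ`
and `x - z ∈ V_J`.
-/

section InnerProductSpace

variable {V : Type*} [NormedAddCommGroup V] [InnerProductSpace ℝ V]

theorem IsClosestPoint.eq_of_real_inner_le_zero {K : Set V} {x y z : V}
    (hy : IsClosestPoint K x y) (hz : z ∈ K) (h : ∀ w ∈ K, ⟪x - z, w - z⟫_ℝ ≤ 0) :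
    y = z := by
  have hdist : ‖x - y‖ ≤ ‖x - z‖ := by simpa only [dist_eq_norm] using hy.2 z hz
  have hcos : ‖x - y‖ ^ 2 = ‖x - z‖ ^ 2 - 2 * ⟪x - z, y - z⟫_ℝ + ‖y - z‖ ^ 2 := by
    rw [← norm_sub_sq_real, sub_sub_sub_cancel_right]
  have hyz : ‖y - z‖ ^ 2 ≤ 0 := by
    nlinarith [h y hy.1, norm_nonneg (x - y), norm_nonneg (x - z)]
  simpa [sub_eq_zero] using le_antisymm hyz (sq_nonneg _)

theorem eq_of_mem_orthogonal_of_sub_mem {U : Submodule ℝ V} {v u₁ u₂ : V}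
    (hu₁ : u₁ ∈ Uᗮ) (hu₂ : u₂ ∈ Uᗮ) (hv₁ : v - u₁ ∈ U) (hv₂ : v - u₂ ∈ U) : u₁ = u₂ := by
  have hU : u₁ - u₂ ∈ U := by
    simpa only [sub_sub_sub_cancel_left] using U.sub_mem hv₂ hv₁
  exact sub_eq_zero.mp (U.orthogonal_disjoint.le_bot ⟨hU, Uᗮ.sub_mem hu₁ hu₂⟩)

theorem real_inner_nonneg_of_mem_coneGen {ι κ : Type*} [Fintype ι] [Fintype κ]
    {u : κ → V} {v : ι → V} (huv : ∀ k i, 0 ≤ ⟪u k, v i⟫_ℝ) {x y : V}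
    (hx : x ∈ coneGen u) (hy : y ∈ coneGen v) : 0 ≤ ⟪x, y⟫_ℝ := by
  obtain ⟨c, hc, rfl⟩ := hx
  obtain ⟨d, hd, rfl⟩ := hy
  rw [sum_inner]
  refine sum_nonneg fun k _ => ?_
  rw [inner_sum]
  refine sum_nonneg fun i _ => ?_
  rw [real_inner_smul_left, real_inner_smul_right]
  exact mul_nonneg (hc k) (mul_nonneg (hd i) (huv k i))

variable {ι : Type*} [DecidableEq ι] {b ω : ι → V}

theorem real_inner_ite_dual_nonneg (hω : ∀ i j, ⟪ω i, b j⟫_ℝ = if i = j then 1 else 0)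
    (J : Finset ι) (k i : ι) : 0 ≤ ⟪if k ∈ J then b k else 0, ω i⟫_ℝ := by
  split_ifs
  · rw [real_inner_comm, hω]
    split_ifs <;> norm_num
  · rw [inner_zero_left]

theorem dual_mem_orthogonal_span_image (hω : ∀ i j, ⟪ω i, b j⟫_ℝ = if i = j then 1 else 0)
    {J : Finset ι} {i : ι} (hi : i ∉ J) :
    ω i ∈ (Submodule.span ℝ (b '' (J : Set ι)))ᗮ := by
  have hle : Submodule.span ℝ (b '' (J : Set ι)) ≤ (ℝ ∙ ω i)ᗮ := by
    rw [Submodule.span_le]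
    rintro _ ⟨j, hj, rfl⟩
    rw [SetLike.mem_coe, Submodule.mem_orthogonal_singleton_iff_inner_right, hω,
      if_neg (ne_of_mem_of_not_mem hj hi).symm]
  exact (Submodule.mem_orthogonal' _ _).2 fun u hu =>
    Submodule.mem_orthogonal_singleton_iff_inner_right.1 (hle hu)

end InnerProductSpace

theorem langlands_retraction_eq_projection_on_cone_general
    {V ι : Type*} [NormedAddCommGroup V] [InnerProductSpace ℝ V]
    [Fintype ι] [DecidableEq ι] (b : Module.Basis ι ℝ V) (ω : ι → V)
    (hω : ∀ i j, ⟪ω i, b j⟫_ℝ = if i = j then 1 else 0)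
    (J : Finset ι) (p : V → V)
    (hp : ∀ v : V, p v ∈ (Submodule.span ℝ (⇑b '' (J : Set ι)))ᗮ ∧
      v - p v ∈ Submodule.span ℝ (⇑b '' (J : Set ι)))
    (x : V) (hx : x ∈ coneGen (fun i => if i ∈ J then -(b i : V) else ω i))
    (y : V) (hy : IsClosestPoint (coneGen ω) x y) :
    y = p x := by
  set U := Submodule.span ℝ (⇑b '' (J : Set ι))
  obtain ⟨c, hc, hxc⟩ := hx
  set z := ∑ i, c i • (if i ∈ J then 0 else ω i)
  set m := ∑ i, c i • (if i ∈ J then b i else 0)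
  have hxzm : x - z = -m := by
    rw [hxc, ← sum_sub_distrib, ← sum_neg_distrib]
    refine sum_congr rfl fun i _ => ?_
    by_cases hi : i ∈ J <;> simp [hi]
  have hzK : z ∈ coneGen ω := ⟨fun i => if i ∈ J then 0 else c i,
    fun i => by by_cases hi : i ∈ J <;> simp [hi, hc i],
    sum_congr rfl fun i _ => by by_cases hi : i ∈ J <;> simp [hi]⟩
  have hzU : z ∈ Uᗮ := Uᗮ.sum_mem fun i _ => Uᗮ.smul_mem _ <| by
    split_ifs with hi
    exacts [Uᗮ.zero_mem, dual_mem_orthogonal_span_image hω hi]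
  have hmU : m ∈ U := U.sum_mem fun i _ => U.smul_mem _ <| by
    split_ifs with hi
    exacts [Submodule.subset_span ⟨i, hi, rfl⟩, U.zero_mem]
  have hyz : y = z := hy.eq_of_real_inner_le_zero hzK fun w hw => by
    have hmw : 0 ≤ ⟪m, w⟫_ℝ :=
      real_inner_nonneg_of_mem_coneGen (real_inner_ite_dual_nonneg hω J) ⟨c, hc, rfl⟩ hw
    rw [hxzm, inner_neg_left, inner_sub_right, Submodule.inner_right_of_mem_orthogonal hmU hzU]
    linarith
  rw [hyz]
  exact eq_of_mem_orthogonal_of_sub_mem hzU (hp x).1 (by rw [hxzm]; exact U.neg_mem hmU) (hp x).2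

/-- For `x ∈ K_J`, the Langlands retraction satisfies `𝔏(x) = pr_J(x)`,
where `pr_J` is the orthogonal projection onto `V_J^⊥` with kernel `V_J`.
In particular `𝔏` is linear on each cone `K_J`. -/
theorem langlands_retraction_eq_projection_on_cone
    {V ι : Type*} [NormedAddCommGroup V] [InnerProductSpace ℝ V] [FiniteDimensional ℝ V]
    [Fintype ι] [DecidableEq ι] (b : Module.Basis ι ℝ V) (ω : ι → V)
    (hω : ∀ i j, ⟪ω i, b j⟫_ℝ = if i = j then 1 else 0)
    (J : Finset ι) (p : V → V)
    (hp : ∀ v : V, p v ∈ (Submodule.span ℝ (⇑b '' (J : Set ι)))ᗮ ∧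
      v - p v ∈ Submodule.span ℝ (⇑b '' (J : Set ι)))
    (x : V) (hx : x ∈ coneGen (fun i => if i ∈ J then -(b i : V) else ω i))
    (y : V) (hy : IsClosestPoint (coneGen ω) x y) :
    y = p x :=
  langlands_retraction_eq_projection_on_cone_general b ω hω J p hp x hx y hy
end

section
/- For the SL(n) root system, under the identification of V with functions f : {0,…,n} → ℝ vanishing at 0 and n, the Langlands retraction sends f to the smallest concave function g : {0,…,n} → ℝ with g(0) = g(n) = 0 and g ≥ f pointwise (the concave majorant); in particular this smallest concave majorant exists. -/
open scoped InnerProductSpace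
open Finset

/-!
Identify a vector `w` of `ℝ^(m+1)` with its profile of partial sums
`k ↦ w 0 + ⋯ + w (k - 1)`. On the sum-zero hyperplane `V` this profile is `k ↦ ⟪w, ω (k - 1)⟫`,
a vector lies in the cone of the simple roots iff its profile is non-negative (so `≤` is the
pointwise order of profiles), and `⟪w, α i⟫` is minus the second difference of the profile at
`i + 1`, so `V⁺` is the set of vectors with concave profile. Hence `{y ∈ V⁺ | y ≥ v}` is the set of
concave majorants of `f`, and every concave `h` vanishing at `0` and `m + 1` is the profile of its
vector of increments, so the least element `L` has the least concave majorant as its profile.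
-/

section PartialSums

variable {N : ℕ}

noncomputable def partialSum (k : ℕ) : EuclideanSpace ℝ (Fin N) →ₗ[ℝ] ℝ :=
  ∑ j : Fin N with j.val < k, EuclideanSpace.projₗ j

lemma partialSum_apply (k : ℕ) (w : EuclideanSpace ℝ (Fin N)) :
    partialSum k w = ∑ j : Fin N with j.val < k, w j := by
  simp [partialSum]

@[simp]
lemma partialSum_zero (w : EuclideanSpace ℝ (Fin N)) : partialSum 0 w = 0 := by
  simp [partialSum_apply]

lemma partialSum_of_le {k : ℕ} (hk : N ≤ k) (w : EuclideanSpace ℝ (Fin N)) :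
    partialSum k w = ∑ j, w j := by
  rw [partialSum_apply, filter_true_of_mem fun j _ => j.isLt.trans_le hk]

lemma partialSum_succ (j : Fin N) (w : EuclideanSpace ℝ (Fin N)) :
    partialSum (j + 1) w = partialSum j w + w j := by
  have : univ.filter (fun i : Fin N => i.val < j + 1) =
      insert j (univ.filter (fun i : Fin N => i.val < j)) := by
    ext i
    simp [Fin.ext_iff]
    omega
  rw [partialSum_apply, partialSum_apply, this, sum_insert (by simp), add_comm]

lemma eq_of_partialSum_eq {w w' : EuclideanSpace ℝ (Fin N)}
    (h : ∀ k ≤ N, partialSum k w = partialSum k w') : w = w' := by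
  ext j
  have h₁ := partialSum_succ j w
  have h₂ := partialSum_succ j w'
  rw [h _ j.isLt, h _ j.isLt.le] at h₁
  linarith

lemma partialSum_single (a : Fin N) (k : ℕ) :
    partialSum k (EuclideanSpace.single a (1 : ℝ)) = if (a : ℕ) < k then 1 else 0 := by
  simp [partialSum_apply, PiLp.single_apply]

def ofIncrements (h : ℕ → ℝ) : EuclideanSpace ℝ (Fin N) :=
  WithLp.toLp 2 fun j => h (j + 1) - h j

lemma partialSum_ofIncrements (h : ℕ → ℝ) {k : ℕ} (hk : k ≤ N) :
    partialSum k (ofIncrements h : EuclideanSpace ℝ (Fin N)) = h k - h 0 := by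
  induction k with
  | zero => simp
  | succ k ih =>
    rw [partialSum_succ ⟨k, hk⟩, ih (by omega)]
    simp [ofIncrements]

end PartialSums

section SimpleRoots

variable {m : ℕ}

noncomputable def simpleRoot (i : Fin m) : EuclideanSpace ℝ (Fin (m + 1)) :=
  EuclideanSpace.single i.castSucc 1 - EuclideanSpace.single i.succ 1

lemma partialSum_simpleRoot (i : Fin m) (k : ℕ) :
    partialSum k (simpleRoot i) = if k = i + 1 then 1 else 0 := by
  rw [simpleRoot, map_sub, partialSum_single, partialSum_single, Fin.val_castSucc, Fin.val_succ]
  split_ifs <;> first | omega | norm_num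

lemma partialSum_sum_smul_simpleRoot (c : Fin m → ℝ) (k : ℕ) :
    partialSum k (∑ i, c i • simpleRoot i) = ∑ i : Fin m, if k = (i : ℕ) + 1 then c i else 0 := by
  simp [partialSum_simpleRoot]

lemma inner_simpleRoot (w : EuclideanSpace ℝ (Fin (m + 1))) (i : Fin m) :
    ⟪w, simpleRoot i⟫_ℝ = 2 * partialSum (i + 1) w - partialSum i w - partialSum (i + 1 + 1) w := by
  have h₁ := partialSum_succ i.castSucc w
  have h₂ := partialSum_succ i.succ w
  rw [Fin.val_castSucc] at h₁
  rw [Fin.val_succ] at h₂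
  simp only [simpleRoot, inner_sub_right, EuclideanSpace.inner_single_right, conj_trivial, one_mul]
  linarith

lemma sum_partialSum_smul_simpleRoot {w : EuclideanSpace ℝ (Fin (m + 1))} (hw : ∑ j, w j = 0) :
    ∑ i : Fin m, partialSum ((i : ℕ) + 1) w • simpleRoot i = w := by
  refine eq_of_partialSum_eq fun k hk => ?_
  rw [partialSum_sum_smul_simpleRoot]
  rcases k with _ | k
  · simp
  obtain hk | rfl := (Nat.lt_succ_iff.1 hk).lt_or_eq
  · rw [Fintype.sum_eq_single ⟨k, hk⟩ fun i hi =>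
      if_neg fun h => hi (Fin.ext (by simp at h ⊢; omega)), if_pos rfl]
  · rw [partialSum_of_le le_rfl, hw]
    exact sum_eq_zero fun i _ => if_neg (by omega)

lemma eq_zero_of_inner_simpleRoot_eq_zero {w : EuclideanSpace ℝ (Fin (m + 1))}
    (hw : ∑ j, w j = 0) (h : ∀ i, ⟪w, simpleRoot i⟫_ℝ = 0) : w = 0 := by
  have := congrArg (⟪w, ·⟫_ℝ) (sum_partialSum_smul_simpleRoot hw)
  simp only [inner_sum, inner_smul_right, h, mul_zero, sum_const_zero] at this
  exact inner_self_eq_zero.1 this.symm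

lemma mem_coneGen_simpleRoot_iff {w : EuclideanSpace ℝ (Fin (m + 1))} :
    w ∈ coneGen simpleRoot ↔ ∑ j, w j = 0 ∧ ∀ k ≤ m + 1, 0 ≤ partialSum k w := by
  constructor
  · rintro ⟨c, hc, rfl⟩
    refine ⟨?_, fun k _ => ?_⟩
    · rw [← partialSum_of_le le_rfl, partialSum_sum_smul_simpleRoot]
      exact sum_eq_zero fun i _ => if_neg (by omega)
    · rw [partialSum_sum_smul_simpleRoot]
      exact sum_nonneg fun i _ => by split_ifs <;> simp [hc]
  · rintro ⟨hw, hpos⟩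
    exact ⟨fun i => partialSum (i + 1) w, fun i => hpos _ (by omega),
      (sum_partialSum_smul_simpleRoot hw).symm⟩

lemma inner_simpleRoot_nonneg_iff_concave {w : EuclideanSpace ℝ (Fin (m + 1))} {F : ℕ → ℝ}
    (hF : ∀ k ≤ m + 1, F k = partialSum k w) :
    (∀ i, 0 ≤ ⟪w, simpleRoot i⟫_ℝ) ↔ ∀ k, 0 < k → k < m + 1 → F (k + 1) + F (k - 1) ≤ 2 * F k := by
  have key (i : Fin m) : ⟪w, simpleRoot i⟫_ℝ = 2 * F (i + 1) - F (i + 1 - 1) - F (i + 1 + 1) := by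
    rw [inner_simpleRoot, Nat.add_sub_cancel, hF _ (by omega), hF _ (by omega), hF _ (by omega)]
  constructor
  · intro h k hk0 hkm
    obtain ⟨i, rfl⟩ : ∃ i : Fin m, (i : ℕ) + 1 = k := ⟨⟨k - 1, by omega⟩, by simp; omega⟩
    linarith [h i, key i]
  · intro h i
    linarith [h (i + 1) (by omega) (by omega), key i]

lemma partialSum_le_of_sub_mem_coneGen_simpleRoot {w z : EuclideanSpace ℝ (Fin (m + 1))}
    (h : z - w ∈ coneGen simpleRoot) {k : ℕ} (hk : k ≤ m + 1) : partialSum k w ≤ partialSum k z :=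
  sub_nonneg.1 (map_sub (partialSum k) z w ▸ (mem_coneGen_simpleRoot_iff.1 h).2 k hk)
end SimpleRoots

section FundamentalWeights

variable {m : ℕ} {ω : Fin m → EuclideanSpace ℝ (Fin (m + 1))}

lemma inner_sum_smul_simpleRoot
    (hdual : ∀ i j, ⟪ω i, simpleRoot j⟫_ℝ = if i = j then 1 else 0) (c : Fin m → ℝ) (i : Fin m) :
    ⟪∑ j, c j • ω j, simpleRoot i⟫_ℝ = c i := by
  simp [sum_inner, inner_smul_left, hdual]

lemma inner_weight_eq_partialSum
    (hdual : ∀ i j, ⟪ω i, simpleRoot j⟫_ℝ = if i = j then 1 else 0)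
    {w : EuclideanSpace ℝ (Fin (m + 1))} (hw : ∑ j, w j = 0) (i : Fin m) :
    ⟪w, ω i⟫_ℝ = partialSum (i + 1) w := by
  rw [real_inner_comm]
  conv_lhs => rw [← sum_partialSum_smul_simpleRoot hw]
  simp [inner_sum, inner_smul_right, hdual]

lemma sum_apply_sum_smul_weight (hωV : ∀ i, ∑ j, ω i j = 0) (c : Fin m → ℝ) :
    ∑ j, (∑ i, c i • ω i) j = 0 := by
  simp only [WithLp.ofLp_sum, WithLp.ofLp_smul, Finset.sum_apply, Pi.smul_apply, smul_eq_mul]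
  rw [sum_comm]
  simp [← mul_sum, hωV]

lemma mem_coneGen_weight_iff (hωV : ∀ i, ∑ j, ω i j = 0)
    (hdual : ∀ i j, ⟪ω i, simpleRoot j⟫_ℝ = if i = j then 1 else 0)
    {w : EuclideanSpace ℝ (Fin (m + 1))} :
    w ∈ coneGen ω ↔ ∑ j, w j = 0 ∧ ∀ i, 0 ≤ ⟪w, simpleRoot i⟫_ℝ := by
  constructor
  · rintro ⟨c, hc, rfl⟩
    exact ⟨sum_apply_sum_smul_weight hωV c, fun i => by
      rw [inner_sum_smul_simpleRoot hdual]; exact hc i⟩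
  · rintro ⟨hw, hpos⟩
    refine ⟨fun i => ⟪w, simpleRoot i⟫_ℝ, hpos, (sub_eq_zero.1 ?_)⟩
    refine eq_zero_of_inner_simpleRoot_eq_zero ?_ fun i => ?_
    · simpa [sum_sub_distrib, hw] using sum_apply_sum_smul_weight hωV fun i => ⟪w, simpleRoot i⟫_ℝ
    · rw [inner_sub_left, inner_sum_smul_simpleRoot hdual, sub_self]

lemma eq_partialSum_of_eq_inner_weight
    (hdual : ∀ i j, ⟪ω i, simpleRoot j⟫_ℝ = if i = j then 1 else 0)
    {w : EuclideanSpace ℝ (Fin (m + 1))} (hw : ∑ j, w j = 0)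
    {F : ℕ → ℝ} (h0 : F 0 = 0) (htop : F (m + 1) = 0) (hF : ∀ i : Fin m, F (i + 1) = ⟪w, ω i⟫_ℝ)
    {k : ℕ} (hk : k ≤ m + 1) : F k = partialSum k w := by
  rcases k with _ | k
  · simp [h0]
  obtain hk | rfl := (Nat.lt_succ_iff.1 hk).lt_or_eq
  · exact (hF ⟨k, hk⟩).trans (inner_weight_eq_partialSum hdual hw _)
  · rw [htop, partialSum_of_le le_rfl, hw]

end FundamentalWeights

/-- For the root system of `SL(n)` (here `n = m + 1`), under the
identification of `v ∈ V` with the function `f : {0, …, n} → ℝ` vanishing at `0` and `n`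
with `f i = ⟪v, ω i⟫` for `0 < i < n`, the Langlands retraction (i.e. the least element `L`
of `{y ∈ V⁺ | y ≥ v}`) corresponds to the smallest concave function `g` with
`g 0 = g n = 0` and `g ≥ f` pointwise; in particular this smallest concave majorant exists. -/
theorem sl_n_langlands_retraction_is_concave_majorant
    (m : ℕ)
    (α : Fin m → EuclideanSpace ℝ (Fin (m + 1)))
    (hα : ∀ i, α i = EuclideanSpace.single i.castSucc 1 - EuclideanSpace.single i.succ 1)
    (ω : Fin m → EuclideanSpace ℝ (Fin (m + 1)))
    (hωV : ∀ i, ∑ j, ω i j = 0)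
    (hdual : ∀ i j, ⟪ω i, α j⟫_ℝ = if i = j then 1 else 0)
    (v : EuclideanSpace ℝ (Fin (m + 1))) (hv : ∑ j, v j = 0)
    (f : ℕ → ℝ) (hf0 : f 0 = 0) (hfn : f (m + 1) = 0)
    (hfi : ∀ i : Fin m, f (i + 1) = ⟪v, ω i⟫_ℝ)
    -- `L` is the Langlands retraction of `v`: the least element of `{y ∈ V⁺ | y ≥ v}`
    (L : EuclideanSpace ℝ (Fin (m + 1)))
    (hL : L ∈ coneGen ω) (hLv : L - v ∈ coneGen α)
    (hLleast : ∀ z, z ∈ coneGen ω → z - v ∈ coneGen α → z - L ∈ coneGen α)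
    (g : ℕ → ℝ) (hg0 : g 0 = 0) (hgn : g (m + 1) = 0)
    (hgi : ∀ i : Fin m, g (i + 1) = ⟪L, ω i⟫_ℝ) :
    (∀ k, 0 < k → k < m + 1 → g (k + 1) + g (k - 1) ≤ 2 * g k) ∧
      (∀ k ≤ m + 1, f k ≤ g k) ∧
      ∀ h : ℕ → ℝ, h 0 = 0 → h (m + 1) = 0 →
        (∀ k, 0 < k → k < m + 1 → h (k + 1) + h (k - 1) ≤ 2 * h k) →
        (∀ k ≤ m + 1, f k ≤ h k) → ∀ k ≤ m + 1, g k ≤ h k := by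
  obtain rfl : α = simpleRoot := funext hα
  obtain ⟨hLV, hLpos⟩ := (mem_coneGen_weight_iff hωV hdual).1 hL
  have hfS k (hk : k ≤ m + 1) := eq_partialSum_of_eq_inner_weight hdual hv hf0 hfn hfi hk
  have hgS k (hk : k ≤ m + 1) := eq_partialSum_of_eq_inner_weight hdual hLV hg0 hgn hgi hk
  refine ⟨(inner_simpleRoot_nonneg_iff_concave hgS).1 hLpos, fun k hk => ?_,
    fun h h0 htop hconc hfh k hk => ?_⟩
  · rw [hfS k hk, hgS k hk]
    exact partialSum_le_of_sub_mem_coneGen_simpleRoot hLv hk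
  · set z : EuclideanSpace ℝ (Fin (m + 1)) := ofIncrements h
    have hzS k (hk : k ≤ m + 1) : h k = partialSum k z := by
      rw [partialSum_ofIncrements h hk, h0, sub_zero]
    have hzV : ∑ j, z j = 0 := by rw [← partialSum_of_le le_rfl, ← hzS _ le_rfl, htop]
    have hzω : z ∈ coneGen ω :=
      (mem_coneGen_weight_iff hωV hdual).2 ⟨hzV, (inner_simpleRoot_nonneg_iff_concave hzS).2 hconc⟩
    have hzv : z - v ∈ coneGen simpleRoot := mem_coneGen_simpleRoot_iff.2
      ⟨by simp [sum_sub_distrib, hzV, hv], fun k hk => by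
        rw [map_sub, ← hzS k hk, ← hfS k hk, sub_nonneg]
        exact hfh k hk⟩
    rw [hgS k hk, hzS k hk]
    exact partialSum_le_of_sub_mem_coneGen_simpleRoot (hLleast z hzω hzv) hk
end
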